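/- Suppose there exists a linear (r,r,d)-robust batch code C : F^k → F^n with n < k(d+1) and r < k. Then there exists a linear (r,r,d)-robust batch code C' : F^{k−1} → F^{n − (d+1) − (k−r)}. -/

import Mathlib

/-!
Write `S j` for the support of the `j`-th column of the generator matrix. A query set `J` with
`|J| ≤ r` that determines `x|_I` for `|I| = r` uses only columns with `S j ⊆ I`, by a rank count.
As `n < k(d+1)`, some coordinate `i` is the whole support of at most `d` columns. For every
`r`-set `I ∋ i` at least `d+1` columns satisfy `i ∈ S j ⊆ I`, since otherwise all of them can be
erased; a covering argument over the `(r-1)`-subsets of the other coordinates then yields at least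
`d+1+(k-r)` columns whose support contains `i`. Deleting the message coordinate `i` and
`d+1+(k-r)` of these columns keeps the code robust: requests avoiding `i` are never answered by a
column involving `i`.
-/

open Finset Function LinearMap

/-- A linear map `C : F^k → F^n` is an `(r,r,d)`-robust batch code: for every
request set `I` of size `r` and erasure set `D` of size `d`, some query set `J`
of size at most `r`, disjoint from `D`, determines `x|_I`. -/
def IsRBC (F : Type) [Field F] (k n r d : ℕ)
    (C : (Fin k → F) →ₗ[F] (Fin n → F)) : Prop :=
  ∀ I : Finset (Fin k), I.card = r → ∀ D : Finset (Fin n), D.card = d →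
    ∃ J : Finset (Fin n), J.card ≤ r ∧ Disjoint J D ∧
      ∀ x y : Fin k → F, (∀ j ∈ J, C x j = C y j) → ∀ i ∈ I, x i = y i

lemma LinearMap.ker_eq_of_ker_le_of_finrank_le_finrank_range {K V W₁ W₂ : Type*} [Field K]
    [AddCommGroup V] [Module K V] [AddCommGroup W₁] [Module K W₁] [AddCommGroup W₂] [Module K W₂]
    [FiniteDimensional K V] [FiniteDimensional K W₁]
    (f : V →ₗ[K] W₁) (g : V →ₗ[K] W₂) (hle : ker f ≤ ker g)
    (hrank : Module.finrank K W₁ ≤ Module.finrank K (range g)) : ker f = ker g := by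
  refine Submodule.eq_of_le_of_finrank_le hle ?_
  have hf := finrank_range_add_finrank_ker f
  have hg := finrank_range_add_finrank_ker g
  have := Submodule.finrank_le (range f)
  omega

/-- Induction on `m`: a nonempty `U j₀` inside some `s`-subset of `X` provides a point `x`;
delete `x` from `X` and every `U j` containing it from `B`. -/
lemma Finset.add_le_card_of_le_card_filter_subset {ι κ : Type*} [DecidableEq ι]
    (U : κ → Finset ι) {c s : ℕ} (m : ℕ) (X : Finset ι) (B : Finset κ) (hX : #X = s + m)
    (hempty : #{j ∈ B | U j = ∅} < c) (hcov : ∀ T ⊆ X, #T = s → c ≤ #{j ∈ B | U j ⊆ T}) :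
    c + m ≤ #B := by
  induction m generalizing X B with
  | zero => exact (hcov X Subset.rfl hX).trans (card_filter_le _ _)
  | succ m ih =>
    obtain ⟨T₀, hT₀X, hT₀⟩ := X.exists_subset_card_eq (show s ≤ #X by omega)
    obtain ⟨j₀, hj₀T, hj₀e⟩ := exists_mem_notMem_of_card_lt_card
      (hempty.trans_le (hcov T₀ hT₀X hT₀))
    simp only [mem_filter] at hj₀T hj₀e
    obtain ⟨x, hx⟩ := nonempty_iff_ne_empty.2 fun h => hj₀e ⟨hj₀T.1, h⟩
    have hxX : x ∈ X := hT₀X (hj₀T.2 hx)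
    have hB' : c + m ≤ #{j ∈ B | x ∉ U j} := by
      refine ih (X.erase x) _ (by rw [card_erase_of_mem hxX]; omega)
        ((card_le_card fun j hj => ?_).trans_lt hempty) fun T hT hTs => ?_
      · simp only [mem_filter] at hj ⊢
        exact ⟨hj.1.1, hj.2⟩
      · refine (hcov T (hT.trans (erase_subset _ _)) hTs).trans (card_le_card fun j hj => ?_)
        simp only [mem_filter] at hj ⊢
        exact ⟨⟨hj.1, fun hxU => (notMem_erase x X) (hT (hj.2 hxU))⟩, hj.2⟩
    have hlt : #{j ∈ B | x ∉ U j} < #B :=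
      card_lt_card (filter_ssubset.2 ⟨j₀, hj₀T.1, not_not.2 hx⟩)
    omega

variable {F : Type} [Field F] {k n r d : ℕ}

lemma IsRBC.of_card_lt (C : (Fin k → F) →ₗ[F] (Fin n → F)) (h : n < d) : IsRBC F k n r d C := by
  intro _ _ D hD
  have := card_le_univ D
  simp only [Fintype.card_fin] at this
  omega

def Determines (C : (Fin k → F) →ₗ[F] (Fin n → F)) (J : Finset (Fin n)) (I : Finset (Fin k)) :
    Prop :=
  ∀ x y : Fin k → F, (∀ j ∈ J, C x j = C y j) → ∀ i ∈ I, x i = y i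

variable [DecidableEq F]

def colSupport (C : (Fin k → F) →ₗ[F] (Fin n → F)) (j : Fin n) : Finset (Fin k) :=
  {i | C (Pi.single i 1) j ≠ 0}

variable {C : (Fin k → F) →ₗ[F] (Fin n → F)}

lemma mem_colSupport {i : Fin k} {j : Fin n} : i ∈ colSupport C j ↔ C (Pi.single i 1) j ≠ 0 := by
  simp [colSupport]

lemma Determines.exists_mem_colSupport {J : Finset (Fin n)} {I : Finset (Fin k)}
    (h : Determines C J I) {i : Fin k} (hi : i ∈ I) : ∃ j ∈ J, i ∈ colSupport C j := by
  by_contra! hJ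
  simp only [mem_colSupport, not_not] at hJ
  simpa using h (Pi.single i 1) 0 (by simpa using hJ) i hi

/-- `x ↦ C x|_J` has kernel inside that of `x ↦ x|_I`, and as `|J| ≤ |I|` the two kernels have
the same dimension, so they coincide. -/
lemma Determines.colSupport_subset {J : Finset (Fin n)} {I : Finset (Fin k)}
    (h : Determines C J I) (hJI : #J ≤ #I) {j : Fin n} (hj : j ∈ J) : colSupport C j ⊆ I := by
  set f := (funLeft F F ((↑) : J → Fin n)).comp C
  set g := funLeft F F ((↑) : I → Fin k)
  have hle : ker f ≤ ker g := fun x hx => by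
    ext ⟨i, hi⟩
    exact h x 0 (fun j hj => by simpa [f] using congrFun hx ⟨j, hj⟩) i hi
  have hker : ker f = ker g := by
    refine ker_eq_of_ker_le_of_finrank_le_finrank_range f g hle ?_
    rw [range_eq_top.2 (funLeft_surjective_of_injective _ _ _ Subtype.val_injective),
      finrank_top]
    simpa using hJI
  intro i hi
  by_contra hiI
  have hsingle : Pi.single i 1 ∈ ker f := by
    rw [hker]
    ext ⟨i', hi'⟩
    simp [g, ne_of_mem_of_not_mem hi' hiI]
  exact mem_colSupport.1 hi (congrFun hsingle ⟨j, hj⟩)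

lemma exists_card_colSupport_eq_singleton_le (C : (Fin k → F) →ₗ[F] (Fin n → F))
    (hn : n < k * (d + 1)) : ∃ i : Fin k, #{j | colSupport C j = {i}} ≤ d := by
  obtain ⟨y, hy, hfiber⟩ := exists_card_fiber_lt_of_card_lt_mul (f := colSupport C)
    (s := univ) (t := univ.map ⟨singleton, singleton_injective⟩) (n := d + 1) (by simpa using hn)
  obtain ⟨i, -, rfl⟩ := mem_map.1 hy
  exact ⟨i, Nat.lt_succ_iff.1 hfiber⟩

lemma IsRBC.le_card_colSupport (hC : IsRBC F k n r d C) (hdn : d ≤ n) {I : Finset (Fin k)}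
    (hI : #I = r) {i : Fin k} (hi : i ∈ I) :
    d + 1 ≤ #{j | i ∈ colSupport C j ∧ colSupport C j ⊆ I} := by
  by_contra! hlt
  obtain ⟨D, hsub, hD⟩ := exists_superset_card_eq (Nat.lt_succ_iff.1 hlt)
    (by rwa [Fintype.card_fin])
  obtain ⟨J, hJ, hJD, hdet⟩ := hC I hI D hD
  obtain ⟨j, hjJ, hij⟩ := Determines.exists_mem_colSupport hdet hi
  have hjI := Determines.colSupport_subset hdet (hI ▸ hJ) hjJ
  exact disjoint_left.1 hJD hjJ (hsub (by simp [hij, hjI]))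

lemma IsRBC.add_le_card_colSupport (hC : IsRBC F k n r d C) (hdn : d ≤ n) (hr : 1 ≤ r)
    (hrk : r ≤ k) {i : Fin k} (hi : #{j | colSupport C j = {i}} ≤ d) :
    d + 1 + (k - r) ≤ #{j | i ∈ colSupport C j} := by
  refine add_le_card_of_le_card_filter_subset (fun j => (colSupport C j).erase i) (s := r - 1)
    (k - r) (univ.erase i) _ (by simp; omega) ((card_le_card fun j hj => ?_).trans_lt
      (Nat.lt_succ_of_le hi)) fun T hT hTr => ?_
  · simp only [mem_filter, mem_univ, true_and, erase_eq_empty_iff] at hj ⊢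
    exact hj.2.resolve_left (ne_empty_of_mem hj.1)
  · have hiT : i ∉ T := fun h => (mem_erase.1 (hT h)).1 rfl
    convert hC.le_card_colSupport hdn (I := insert i T) (by rw [card_insert_of_notMem hiT]; omega)
      (mem_insert_self i T) using 2
    ext j
    simp [← subset_insert_iff]

lemma IsRBC.shorten {k' n' : ℕ} (hC : IsRBC F k n r d C) {i₀ : Fin k}
    {f : Fin k' → Fin k} (hf : Injective f) (hfi : ∀ m, f m ≠ i₀)
    {g : Fin n' → Fin n} (hg : Injective g) (hgi : ∀ j ∉ Set.range g, i₀ ∈ colSupport C j) :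
    IsRBC F k' n' r d ((funLeft F F g).comp (C.comp (ExtendByZero.linearMap F f))) := by
  intro I hI D hD
  obtain ⟨J, hJ, hJD, hdet⟩ := hC (I.map ⟨f, hf⟩) (by simpa using hI) (D.map ⟨g, hg⟩)
    (by simpa using hD)
  have hJg : ∀ j ∈ J, ∃ j', g j' = j := fun j hj => by
    by_contra hj'
    have hI' := Determines.colSupport_subset hdet (by simpa [hI] using hJ) hj (hgi j hj')
    simp only [mem_map, Embedding.coeFn_mk] at hI'
    exact hI'.elim fun m hm => hfi m hm.2
  refine ⟨J.preimage g hg.injOn, ?_, ?_, fun x y hxy i hi => ?_⟩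
  · calc #(J.preimage g hg.injOn) = #((J.preimage g hg.injOn).map ⟨g, hg⟩) := (card_map _).symm
      _ ≤ #J := card_le_card (map_subset_iff_subset_preimage.2 Subset.rfl)
      _ ≤ r := hJ
  · refine disjoint_left.2 fun j hjJ hjD => disjoint_left.1 hJD (mem_preimage.1 hjJ) ?_
    exact mem_map_of_mem _ hjD
  · have := hdet (ExtendByZero.linearMap F f x) (ExtendByZero.linearMap F f y) (fun j hj => ?_)
      (f i) (mem_map_of_mem ⟨f, hf⟩ hi)
    · simpa [hf.extend_apply] using this
    obtain ⟨j', rfl⟩ := hJg j hj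
    simpa using hxy j' (mem_preimage.2 hj)

theorem stmt_6_general {F : Type} [Field F] {k n r d : ℕ}
    (hr : 1 ≤ r) (hrk : r < k) (hn : n < k * (d + 1))
    (C : (Fin k → F) →ₗ[F] (Fin n → F)) (hC : IsRBC F k n r d C) :
    ∃ C' : (Fin (k - 1) → F) →ₗ[F] (Fin (n - (d + 1) - (k - r)) → F),
      IsRBC F (k - 1) (n - (d + 1) - (k - r)) r d C' := by
  classical
  by_cases hd : n - (d + 1) - (k - r) < d
  · exact ⟨0, IsRBC.of_card_lt 0 hd⟩
  obtain ⟨i, hi⟩ := exists_card_colSupport_eq_singleton_le C hn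
  obtain ⟨T, hTi, hT⟩ := exists_subset_card_eq (hC.add_le_card_colSupport (by omega) hr hrk.le hi)
  have hK : #(univ.erase i) = k - 1 := by simp
  have hN : #Tᶜ = n - (d + 1) - (k - r) := by rw [card_compl, hT, Fintype.card_fin]; omega
  refine ⟨_, hC.shorten (i₀ := i) (orderEmbOfFin _ hK).injective (fun m => ?_)
    (orderEmbOfFin _ hN).injective fun j hj => ?_⟩
  · exact (mem_erase.1 (orderEmbOfFin_mem _ hK m)).1
  · rw [range_orderEmbOfFin, coe_compl, Set.notMem_compl_iff] at hj
    simpa using hTi hj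

theorem stmt_6 {F : Type} [Field F] [Fintype F] {k n r d : ℕ}
    (hr : 1 ≤ r) (hrk : r < k) (hn : n < k * (d + 1))
    (C : (Fin k → F) →ₗ[F] (Fin n → F)) (hC : IsRBC F k n r d C) :
    ∃ C' : (Fin (k - 1) → F) →ₗ[F] (Fin (n - (d + 1) - (k - r)) → F),
      IsRBC F (k - 1) (n - (d + 1) - (k - r)) r d C' :=
  stmt_6_general hr hrk hn C hC
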